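/- Let f : Σ_𝐀 → ℝ be Hölder continuous and let ν_f be the eigenmeasure of the dual transfer operator: ∫ L_f φ dν_f = λ_f ∫ φ dν_f for all Hölder φ. Then ν_f is non-singular with respect to σ, and for each n ∈ ℕ the n-th Jacobian of ν_f equals λ_f^{−n} exp(S_n f), i.e., dν_f/dν_f^{(n)} = λ_f^{−n} e^{S_n f} where ν_f^{(n)}(B) = ∑_{|w|=n} ν_f(σ^n(B ∩ [w])). -/

import Mathlib

open MeasureTheory Filter Topology
open scoped BigOperators ENNReal

/-- The one-sided topological Markov shift over the alphabet `Fin N` with (0-1 real)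
transition matrix `A`. -/
def Shift (N : ℕ) (A : Matrix (Fin N) (Fin N) ℝ) : Type :=
  {ω : ℕ → Fin N // ∀ n, A (ω n) (ω (n + 1)) = 1}

/-- Product (= metric `d(ω,ω') = ∑ |ω_n − ω'_n| / 2^n`) uniformity on the shift space. -/
noncomputable instance (N : ℕ) (A : Matrix (Fin N) (Fin N) ℝ) : UniformSpace (Shift N A) :=
  letI : UniformSpace (Fin N) := ⊥
  inferInstanceAs (UniformSpace {ω : ℕ → Fin N // ∀ n, A (ω n) (ω (n + 1)) = 1})

noncomputable instance (N : ℕ) (A : Matrix (Fin N) (Fin N) ℝ) : MeasurableSpace (Shift N A) := borel _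
instance (N : ℕ) (A : Matrix (Fin N) (Fin N) ℝ) : BorelSpace (Shift N A) := ⟨rfl⟩

/-- The shift map `σ`. -/
def shiftMap {N : ℕ} {A : Matrix (Fin N) (Fin N) ℝ} : Shift N A → Shift N A :=
  fun ω => ⟨fun n => ω.1 (n + 1), fun n => ω.2 (n + 1)⟩

/-- The cylinder `[ω|n]` of points agreeing with `ω` in the first `n` coordinates. -/
def cyl {N : ℕ} {A : Matrix (Fin N) (Fin N) ℝ} (ω : Shift N A) (n : ℕ) : Set (Shift N A) :=
  {ω' | ∀ k < n, ω'.1 k = ω.1 k}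

/-- The cylinder `[w]` of a word `w` of length `n`. -/
def cylW {N : ℕ} {A : Matrix (Fin N) (Fin N) ℝ} {n : ℕ} (w : Fin n → Fin N) :
    Set (Shift N A) :=
  {ω | ∀ k : Fin n, ω.1 k.1 = w k}

/-- Birkhoff sum `S_n f = ∑_{k<n} f ∘ σ^k`. -/
noncomputable def birkhoff {N : ℕ} {A : Matrix (Fin N) (Fin N) ℝ} (f : Shift N A → ℝ)
    (n : ℕ) (ω : Shift N A) : ℝ :=
  ∑ k ∈ Finset.range n, f (shiftMap^[k] ω)

/-- The matrix `A` is a 0-1 matrix. -/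
def ZeroOne {N : ℕ} (A : Matrix (Fin N) (Fin N) ℝ) : Prop := ∀ i j, A i j = 0 ∨ A i j = 1

/-- The matrix `A` is aperiodic: some power has all entries positive. -/
def Aperiodic {N : ℕ} (A : Matrix (Fin N) (Fin N) ℝ) : Prop := ∃ k : ℕ, ∀ i j, 0 < (A ^ k) i j

/-- The metric `d(ω,ω') = ∑ |ω_n − ω'_n| / 2^n` on the shift space. -/
noncomputable def dshift {N : ℕ} {A : Matrix (Fin N) (Fin N) ℝ} (ω ω' : Shift N A) : ℝ :=
  ∑' n : ℕ, |((ω.1 n : ℕ) : ℝ) - ((ω'.1 n : ℕ) : ℝ)| / 2 ^ n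

/-- `f` is Hölder continuous (w.r.t. the metric `dshift`). -/
def HolderCont {N : ℕ} {A : Matrix (Fin N) (Fin N) ℝ} (f : Shift N A → ℝ) : Prop :=
  ∃ α > (0 : ℝ), ∃ C : ℝ, ∀ ω ω', |f ω - f ω'| ≤ C * dshift ω ω' ^ α

/-- The transfer operator `(L_f φ)(ω) = ∑_{σω' = ω} e^{f ω'} φ ω'`. -/
noncomputable def transferOp {N : ℕ} {A : Matrix (Fin N) (Fin N) ℝ} (f φ : Shift N A → ℝ)
    (ω : Shift N A) : ℝ :=
  ∑' ω' : {ω' : Shift N A // shiftMap ω' = ω}, Real.exp (f ω'.1) * φ ω'.1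

/-- `μ` is shift invariant. -/
def Invariant {N : ℕ} {A : Matrix (Fin N) (Fin N) ℝ} (μ : Measure (Shift N A)) : Prop :=
  ∀ B : Set (Shift N A), MeasurableSet B → μ (shiftMap ⁻¹' B) = μ B

/-- `μ` is a Gibbs measure for `f` with pressure constant `P`:
`C⁻¹ ≤ μ [ω|n] / exp(−nP + S_n f ω) ≤ C` for all `ω`, `n`. -/
def IsGibbs {N : ℕ} {A : Matrix (Fin N) (Fin N) ℝ} (μ : Measure (Shift N A))
    (f : Shift N A → ℝ) (P : ℝ) : Prop :=
  ∃ C > (0 : ℝ), ∀ (ω : Shift N A) (n : ℕ),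
    C⁻¹ * Real.exp (-(n : ℝ) * P + birkhoff f n ω) ≤ (μ (cyl ω n)).toReal ∧
    (μ (cyl ω n)).toReal ≤ C * Real.exp (-(n : ℝ) * P + birkhoff f n ω)

/-- Entropy of the partition of `Σ_A` into cylinders of length `n`. -/
noncomputable def cylEntropy {N : ℕ} {A : Matrix (Fin N) (Fin N) ℝ}
    (μ : Measure (Shift N A)) (n : ℕ) : ℝ :=
  -∑ w : Fin n → Fin N, (μ (cylW w)).toReal * Real.log (μ (cylW w)).toReal

/-- Kolmogorov–Sinai entropy of an invariant measure on the shift, computed (via the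
generating cylinder partition and subadditivity) as `inf_n H_n / n = lim_n H_n / n`. -/
noncomputable def ksEntropy {N : ℕ} {A : Matrix (Fin N) (Fin N) ℝ}
    (μ : Measure (Shift N A)) : ℝ :=
  ⨅ n : ℕ, cylEntropy μ (n + 1) / (n + 1)

/-- Topological pressure `P(σ, f) = sup_μ (h_μ(σ) + ∫ f dμ)` over invariant Borel
probability measures. -/
noncomputable def pressure {N : ℕ} {A : Matrix (Fin N) (Fin N) ℝ} (f : Shift N A → ℝ) : ℝ :=
  sSup {x : ℝ | ∃ μ : Measure (Shift N A), IsProbabilityMeasure μ ∧ Invariant μ ∧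
    x = ksEntropy μ + ∫ ω, f ω ∂μ}

/-- The entropy spectrum `E^{(μ)}(α)`: the topological entropy of the level set
`{ω : lim_n −(1/n) log μ [ω|n] = α}`. -/
noncomputable def entSpec {N : ℕ} {A : Matrix (Fin N) (Fin N) ℝ}
    (μ : Measure (Shift N A)) (α : ℝ) : EReal :=
  Dynamics.coverEntropy shiftMap
    {ω : Shift N A |
      Tendsto (fun n : ℕ => -(n : ℝ)⁻¹ * Real.log (μ (cyl ω n)).toReal) atTop (𝓝 α)}

/-!
For a set `S` on which `σ` is injective, every point has at most one preimage in `S`, so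
`L_f (𝟙_S e^{-f} · g ∘ σ) = 𝟙_{σ S} g`. Applying the eigen-equation `n` times to the Hölder
functions `𝟙_S e^{-S_k f}`, for `S` a finite union of cylinders on which `σⁿ` is injective, gives
`λⁿ ∫_S e^{-S_n f} dν = ν (σⁿ S)`. On a cylinder `[w]` of length `n` the map `σⁿ` is a continuous
injection, so `E ↦ ν (σⁿ (E ∩ [w]))` is a measure; it agrees with `λⁿ e^{-S_n f} ν` on the
π-system of finite unions of cylinders, hence everywhere. Non-singularity is the case `n = 1`:
the density is positive, and `σ⁻¹ B` is covered by the sets `σ⁻¹ B ∩ [a]`, whose images lie in `B`.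
-/

lemma Real.abs_exp_sub_exp_le {x y M : ℝ} (hx : x ≤ M) (hy : y ≤ M) :
    |Real.exp x - Real.exp y| ≤ Real.exp M * |x - y| := by
  wlog h : y ≤ x generalizing x y
  · rw [abs_sub_comm, abs_sub_comm x y]; exact this hy hx (le_of_not_ge h)
  rw [abs_of_nonneg (sub_nonneg.2 (Real.exp_le_exp.2 h)), abs_of_nonneg (sub_nonneg.2 h)]
  have hsub : Real.exp x - Real.exp y = Real.exp x * (1 - Real.exp (y - x)) := by
    rw [mul_sub, mul_one, ← Real.exp_add, add_sub_cancel]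
  rw [hsub]
  nlinarith [Real.add_one_le_exp (y - x), Real.exp_pos x, Real.exp_le_exp.2 hx]

/-- By Lusin–Souslin, `g` is a measurable embedding of the Polish space `K`, so
`E ↦ ν (g '' (E ∩ K))` is a measure. -/
theorem measure_image_eq_of_isPiSystem {X Y : Type*} [TopologicalSpace X] [PolishSpace X]
    [MeasurableSpace X] [BorelSpace X] [TopologicalSpace Y] [T2Space Y] [MeasurableSpace Y]
    [BorelSpace Y] {K : Set X} (hK : IsClosed K) {g : X → Y} (hg : ContinuousOn g K)
    (hinj : Set.InjOn g K) (ν : Measure Y) (ρ : Measure X) [IsFiniteMeasure ρ]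
    {C : Set (Set X)} (hgen : ‹MeasurableSpace X› = MeasurableSpace.generateFrom C)
    (hC : IsPiSystem C) (huniv : Set.univ ∈ C) (h : ∀ s ∈ C, ν (g '' (s ∩ K)) = ρ (s ∩ K))
    {E : Set X} (hEK : E ⊆ K) : ν (g '' E) = ρ E := by
  have : PolishSpace K := hK.polishSpace
  have hg_emb : MeasurableEmbedding (K.domRestrict g) :=
    hg.domRestrict.measurableEmbedding hinj.injective
  have hval_emb : MeasurableEmbedding (Subtype.val : K → X) := .subtype_coe hK.measurableSet
  have himage : ∀ s, ν (g '' (s ∩ K)) = (ν.comap (K.domRestrict g)).map Subtype.val s := fun s => by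
    rw [hval_emb.map_apply, hg_emb.comap_apply, Set.domRestrict_eq, Set.image_comp,
      Subtype.image_preimage_coe, Set.inter_comm]
  have hρK : ∀ s, ρ.restrict K s = ρ (s ∩ K) := fun s => Measure.restrict_apply' hK.measurableSet
  have hext : ρ.restrict K = (ν.comap (K.domRestrict g)).map Subtype.val :=
    ext_of_generate_finite C hgen hC (fun s hs => by rw [hρK, ← himage, h s hs])
      (by rw [hρK, ← himage, h _ huniv])
  rw [← Set.inter_eq_left.2 hEK, himage, ← hext, hρK, Set.inter_eq_left.2 hEK]

section

variable {N : ℕ} {A : Matrix (Fin N) (Fin N) ℝ}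

section Topology

instance : CompactSpace (Shift N A) := by
  have hset : {ω : ℕ → Fin N | ∀ n, A (ω n) (ω (n + 1)) = 1} =
      ⋂ n, (fun ω : ℕ → Fin N => (ω n, ω (n + 1))) ⁻¹' {p | A p.1 p.2 = 1} := by
    ext; simp
  have hclosed : IsClosed {ω : ℕ → Fin N | ∀ n, A (ω n) (ω (n + 1)) = 1} := by
    rw [hset]
    exact isClosed_iInter fun n =>
      (isClosed_discrete _).preimage ((continuous_apply n).prodMk (continuous_apply (n + 1)))
  exact isCompact_iff_compactSpace.mp hclosed.isCompact

instance : T2Space (Shift N A) :=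
  inferInstanceAs (T2Space {ω : ℕ → Fin N // ∀ n, A (ω n) (ω (n + 1)) = 1})

instance : SecondCountableTopology (Shift N A) :=
  TopologicalSpace.secondCountableTopology_induced (Shift N A) (ℕ → Fin N) Subtype.val

open scoped Uniformity in
/-- With compactness, this makes `Shift N A` a Polish space. -/
instance : (𝓤 (Shift N A)).IsCountablyGenerated := by
  let : UniformSpace (Fin N) := ⊥
  have : (𝓤 (Fin N)).IsCountablyGenerated :=
    inferInstanceAs (Filter.principal SetRel.id).IsCountablyGenerated
  exact Filter.comap.isCountablyGenerated (𝓤 (ℕ → Fin N)) _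

lemma continuous_coord (k : ℕ) : Continuous fun ω : Shift N A => ω.1 k :=
  (continuous_apply k).comp continuous_subtype_val

lemma isOpen_cyl (ω : Shift N A) (n : ℕ) : IsOpen (cyl ω n) := by
  have hcyl : cyl ω n = ⋂ k ∈ Finset.range n, (fun ω' : Shift N A => ω'.1 k) ⁻¹' {ω.1 k} := by
    ext; simp [cyl]
  rw [hcyl]
  exact isOpen_biInter_finset fun k _ => (isOpen_discrete _).preimage (continuous_coord k)

lemma continuous_shiftMap : Continuous (shiftMap : Shift N A → Shift N A) :=
  (continuous_pi fun n => continuous_coord (n + 1)).subtype_mk _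

end Topology

lemma mem_cyl_self (ω : Shift N A) (n : ℕ) : ω ∈ cyl ω n := fun _ _ => rfl

lemma cyl_subset_cyl (ω : Shift N A) {m n : ℕ} (h : m ≤ n) : cyl ω n ⊆ cyl ω m :=
  fun _ hω' k hk => hω' k (hk.trans_le h)

lemma shiftMap_iterate_apply (n : ℕ) (ω : Shift N A) (k : ℕ) :
    (shiftMap^[n] ω).1 k = ω.1 (k + n) := by
  induction n generalizing ω with
  | zero => rfl
  | succ n ih => rw [Function.iterate_succ_apply, ih]; rfl

lemma birkhoff_eq_birkhoffSum (f : Shift N A → ℝ) : birkhoff f = birkhoffSum shiftMap f := rfl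

lemma injOn_iterate_cylW {n : ℕ} (w : Fin n → Fin N) :
    Set.InjOn shiftMap^[n] (cylW w : Set (Shift N A)) := by
  intro ω hω ω' hω' h
  refine Subtype.ext (funext fun k => ?_)
  by_cases hk : k < n
  · exact (hω ⟨k, hk⟩).trans (hω' ⟨k, hk⟩).symm
  · have := congrArg (fun x : Shift N A => x.1 (k - n)) h
    simpa only [shiftMap_iterate_apply, Nat.sub_add_cancel (not_lt.1 hk)] using this

def DependsOnFirst (r : ℕ) (S : Set (Shift N A)) : Prop := ∀ ω ∈ S, cyl ω r ⊆ S

namespace DependsOnFirst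

variable {r r' : ℕ} {S T : Set (Shift N A)}

lemma mono (hS : DependsOnFirst r S) (h : r ≤ r') : DependsOnFirst r' S :=
  fun ω hω => (cyl_subset_cyl ω h).trans (hS ω hω)

lemma inter (hS : DependsOnFirst r S) (hT : DependsOnFirst r' T) :
    DependsOnFirst (max r r') (S ∩ T) :=
  fun ω hω => Set.subset_inter
    ((cyl_subset_cyl ω (le_max_left r r')).trans (hS ω hω.1))
    ((cyl_subset_cyl ω (le_max_right r r')).trans (hT ω hω.2))

lemma compl (hS : DependsOnFirst r S) : DependsOnFirst r Sᶜ := by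
  intro ω hω ω' hω' hω'S
  exact hω (hS ω' hω'S fun k hk => (hω' k hk).symm)

lemma isOpen (hS : DependsOnFirst r S) : IsOpen S :=
  isOpen_iff_forall_mem_open.2 fun ω hω => ⟨cyl ω r, hS ω hω, isOpen_cyl ω r, mem_cyl_self ω r⟩

lemma isClosed (hS : DependsOnFirst r S) : IsClosed S :=
  isOpen_compl_iff.1 hS.compl.isOpen

lemma measurableSet (hS : DependsOnFirst r S) : MeasurableSet S :=
  hS.isOpen.measurableSet

/-- A preimage under `σ` is obtained by prepending the first letter, which keeps admissibility
because `r + 1 ≥ 1` letters of the image are prescribed. -/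
lemma image_shiftMap (hS : DependsOnFirst (r + 1) S) : DependsOnFirst (r + 1) (shiftMap '' S) := by
  rintro _ ⟨ω, hω, rfl⟩ ω' hω'
  have hadm : ∀ k, A (Nat.casesOn k (ω.1 0) ω'.1) (Nat.casesOn (k + 1) (ω.1 0) ω'.1) = 1
  | 0 => by
    show A (ω.1 0) (ω'.1 0) = 1
    rw [hω' 0 (Nat.succ_pos r)]
    exact ω.2 0
  | k + 1 => ω'.2 k
  refine ⟨⟨fun k => Nat.casesOn k (ω.1 0) ω'.1, hadm⟩, hS ω hω ?_, rfl⟩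
  rintro (_ | k) hk
  · rfl
  · exact hω' k (by omega)

end DependsOnFirst

lemma dependsOnFirst_cylW {n : ℕ} (w : Fin n → Fin N) :
    DependsOnFirst n (cylW w : Set (Shift N A)) :=
  fun _ hω _ hω' k => (hω' k k.2).trans (hω k)

lemma dependsOnFirst_univ : DependsOnFirst 0 (Set.univ : Set (Shift N A)) :=
  fun _ _ => Set.subset_univ _

lemma isPiSystem_dependsOnFirst : IsPiSystem {S : Set (Shift N A) | ∃ r, DependsOnFirst r S} :=
  fun _ ⟨_, hS⟩ _ ⟨_, hT⟩ _ => ⟨_, hS.inter hT⟩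

lemma isTopologicalBasis_preimage_cylinder :
    TopologicalSpace.IsTopologicalBasis (α := Shift N A)
      (Set.preimage Subtype.val '' {s | ∃ x n, s = PiNat.cylinder x n}) :=
  (PiNat.isTopologicalBasis_cylinders fun _ : ℕ => Fin N).isInducing ⟨rfl⟩

lemma measurableSpace_eq_generateFrom_dependsOnFirst :
    (inferInstance : MeasurableSpace (Shift N A)) =
      MeasurableSpace.generateFrom {S | ∃ r, DependsOnFirst r S} := by
  refine le_antisymm ?_ (MeasurableSpace.generateFrom_le fun S ⟨_, hS⟩ => hS.measurableSet)
  change borel (Shift N A) ≤ _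
  rw [isTopologicalBasis_preimage_cylinder.borel_eq_generateFrom]
  refine MeasurableSpace.generateFrom_mono ?_
  rintro _ ⟨_, ⟨x, n, rfl⟩, rfl⟩
  exact ⟨n, fun ω hω ω' hω' k hk => (hω' k hk).trans (hω k hk)⟩

section Metric

lemma dshift_term_le (ω ω' : Shift N A) (n : ℕ) :
    |((ω.1 n : ℕ) : ℝ) - ((ω'.1 n : ℕ) : ℝ)| / 2 ^ n ≤ N * (1 / 2) ^ n := by
  have hω : ((ω.1 n : ℕ) : ℝ) < N := by exact_mod_cast (ω.1 n).2
  have hω' : ((ω'.1 n : ℕ) : ℝ) < N := by exact_mod_cast (ω'.1 n).2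
  rw [div_eq_mul_one_div, ← one_div_pow]
  gcongr
  exact abs_sub_le_of_nonneg_of_le (Nat.cast_nonneg _) hω.le (Nat.cast_nonneg _) hω'.le

lemma summable_dshift_term (ω ω' : Shift N A) :
    Summable fun n => |((ω.1 n : ℕ) : ℝ) - ((ω'.1 n : ℕ) : ℝ)| / 2 ^ n :=
  .of_nonneg_of_le (fun _ => by positivity) (dshift_term_le ω ω')
    ((summable_geometric_two).mul_left _)

lemma dshift_nonneg (ω ω' : Shift N A) : 0 ≤ dshift ω ω' :=
  tsum_nonneg fun _ => by positivity

lemma dshift_comm (ω ω' : Shift N A) : dshift ω ω' = dshift ω' ω := by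
  simp only [dshift, abs_sub_comm]

lemma dshift_le_of_mem_cyl {ω ω' : Shift N A} {m : ℕ} (h : ω' ∈ cyl ω m) :
    dshift ω ω' ≤ 2 * (N : ℝ) * (1 / 2) ^ m := by
  rw [dshift, ← (summable_dshift_term ω ω').sum_add_tsum_nat_add m,
    Finset.sum_eq_zero fun k hk => by
      rw [h k (Finset.mem_range.1 hk), sub_self, abs_zero, zero_div],
    zero_add]
  calc ∑' k, |((ω.1 (k + m) : ℕ) : ℝ) - ((ω'.1 (k + m) : ℕ) : ℝ)| / 2 ^ (k + m)
      ≤ ∑' k, (N : ℝ) * (1 / 2 : ℝ) ^ m * (1 / 2 : ℝ) ^ k := by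
        refine Summable.tsum_le_tsum (fun k => ?_) ((summable_nat_add_iff m).2
          (summable_dshift_term ω ω')) (summable_geometric_two.mul_left _)
        rw [mul_assoc, ← pow_add, add_comm m]
        exact dshift_term_le ω ω' (k + m)
    _ = 2 * (N : ℝ) * (1 / 2) ^ m := by rw [tsum_mul_left, tsum_geometric_two]; ring

lemma dshift_le (ω ω' : Shift N A) : dshift ω ω' ≤ 2 * (N : ℝ) := by
  simpa using dshift_le_of_mem_cyl (fun k hk => absurd hk k.not_lt_zero : ω' ∈ cyl ω 0)

lemma half_pow_le_dshift {ω ω' : Shift N A} {k : ℕ} (h : ω.1 k ≠ ω'.1 k) :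
    (1 / 2 : ℝ) ^ k ≤ dshift ω ω' := by
  have hne : ((ω.1 k : ℕ) : ℤ) - (ω'.1 k : ℕ) ≠ 0 :=
    sub_ne_zero.2 (by exact_mod_cast Fin.val_ne_of_ne h)
  have hone : (1 : ℝ) ≤ |((ω.1 k : ℕ) : ℝ) - ((ω'.1 k : ℕ) : ℝ)| := by
    exact_mod_cast Int.one_le_abs hne
  refine le_trans ?_ ((summable_dshift_term ω ω').le_tsum k fun _ _ => by positivity)
  rw [one_div_pow]
  exact div_le_div_of_nonneg_right hone (by positivity)

lemma dshift_shiftMap_le (ω ω' : Shift N A) :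
    dshift (shiftMap ω) (shiftMap ω') ≤ 2 * dshift ω ω' := by
  have hshift : dshift (shiftMap ω) (shiftMap ω') =
      2 * ∑' n, |((ω.1 (n + 1) : ℕ) : ℝ) - ((ω'.1 (n + 1) : ℕ) : ℝ)| / 2 ^ (n + 1) := by
    rw [dshift, ← tsum_mul_left]
    refine tsum_congr fun n => ?_
    rw [pow_succ]
    field_simp
    rfl
  rw [hshift, dshift, (summable_dshift_term ω ω').tsum_eq_zero_add]
  have : (0 : ℝ) ≤ |((ω.1 0 : ℕ) : ℝ) - ((ω'.1 0 : ℕ) : ℝ)| / 2 ^ 0 := by positivity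
  linarith

end Metric

section Holder

def HolderOfOrder (α : ℝ) (g : Shift N A → ℝ) : Prop :=
  ∃ C ≥ (0 : ℝ), ∀ ω ω', |g ω - g ω'| ≤ C * dshift ω ω' ^ α

lemma holderCont_iff {g : Shift N A → ℝ} : HolderCont g ↔ ∃ α > 0, HolderOfOrder α g := by
  refine ⟨fun ⟨α, hα, C, hC⟩ => ⟨α, hα, |C|, abs_nonneg C, fun ω ω' => (hC ω ω').trans ?_⟩,
    fun ⟨α, hα, C, _, hC⟩ => ⟨α, hα, C, hC⟩⟩
  exact mul_le_mul_of_nonneg_right (le_abs_self C) (Real.rpow_nonneg (dshift_nonneg ω ω') α)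

namespace HolderOfOrder

variable {α : ℝ} {g : Shift N A → ℝ}

lemma neg (hg : HolderOfOrder α g) : HolderOfOrder α fun ω => -g ω := by
  obtain ⟨C, hC0, hC⟩ := hg
  exact ⟨C, hC0, fun ω ω' => by rw [neg_sub_neg, abs_sub_comm]; exact hC ω ω'⟩

lemma sum {ι : Type*} {g : ι → Shift N A → ℝ} (hg : ∀ i, HolderOfOrder α (g i)) (s : Finset ι) :
    HolderOfOrder α fun ω => ∑ i ∈ s, g i ω := by
  choose C hC0 hC using hg
  refine ⟨∑ i ∈ s, C i, Finset.sum_nonneg fun i _ => hC0 i, fun ω ω' => ?_⟩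
  rw [← Finset.sum_sub_distrib, Finset.sum_mul]
  exact (Finset.abs_sum_le_sum_abs _ _).trans (Finset.sum_le_sum fun i _ => hC i ω ω')

lemma comp_shiftMap (hα : 0 ≤ α) (hg : HolderOfOrder α g) :
    HolderOfOrder α (g ∘ shiftMap) := by
  obtain ⟨C, hC0, hC⟩ := hg
  refine ⟨C * 2 ^ α, by positivity, fun ω ω' => (hC _ _).trans ?_⟩
  rw [mul_assoc, ← Real.mul_rpow zero_le_two (dshift_nonneg ω ω')]
  gcongr
  · exact dshift_nonneg _ _
  · exact dshift_shiftMap_le ω ω'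

lemma comp_iterate (hα : 0 ≤ α) (hg : HolderOfOrder α g) (k : ℕ) :
    HolderOfOrder α (g ∘ shiftMap^[k]) := by
  induction k with
  | zero => exact hg
  | succ k ih => rw [Function.iterate_succ, ← Function.comp_assoc]; exact ih.comp_shiftMap hα

lemma exists_abs_le (hα : 0 ≤ α) (hg : HolderOfOrder α g) : ∃ M ≥ 0, ∀ ω, |g ω| ≤ M := by
  obtain ⟨C, hC0, hC⟩ := hg
  rcases isEmpty_or_nonempty (Shift N A) with h | ⟨⟨ω₀⟩⟩
  · exact ⟨0, le_rfl, fun ω => isEmptyElim ω⟩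
  refine ⟨|g ω₀| + C * (2 * N) ^ α, by positivity, fun ω => ?_⟩
  have hd : C * dshift ω ω₀ ^ α ≤ C * (2 * N) ^ α := by
    gcongr
    exacts [dshift_nonneg ω ω₀, dshift_le ω ω₀]
  linarith [abs_sub_abs_le_abs_sub (g ω) (g ω₀), hC ω ω₀]

lemma exp (hα : 0 ≤ α) (hg : HolderOfOrder α g) : HolderOfOrder α fun ω => Real.exp (g ω) := by
  obtain ⟨M, -, hM⟩ := hg.exists_abs_le hα
  obtain ⟨C, hC0, hC⟩ := hg
  refine ⟨Real.exp M * C, by positivity, fun ω ω' => ?_⟩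
  calc |Real.exp (g ω) - Real.exp (g ω')| ≤ Real.exp M * |g ω - g ω'| :=
        Real.abs_exp_sub_exp_le (le_of_abs_le (hM ω)) (le_of_abs_le (hM ω'))
    _ ≤ Real.exp M * C * dshift ω ω' ^ α := by rw [mul_assoc]; gcongr; exact hC ω ω'

/-- Points on either side of the boundary of `S` differ within the first `r` letters, so they
are at distance at least `2⁻ʳ`. -/
lemma indicator (hα : 0 ≤ α) (hg : HolderOfOrder α g) {r : ℕ} {S : Set (Shift N A)}
    (hS : DependsOnFirst r S) : HolderOfOrder α (S.indicator g) := by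
  obtain ⟨M, hM0, hM⟩ := hg.exists_abs_le hα
  obtain ⟨C, hC0, hC⟩ := hg
  have hbdry : ∀ ω ω', ω ∈ S → ω' ∉ S → |g ω| ≤ M * (2 ^ r) ^ α * dshift ω ω' ^ α := by
    intro ω ω' hω hω'
    obtain ⟨k, hk, hne⟩ : ∃ k < r, ω'.1 k ≠ ω.1 k := by
      by_contra! h
      exact hω' (hS ω hω h)
    have hd : (1 / 2 : ℝ) ^ r ≤ dshift ω ω' :=
      (pow_le_pow_of_le_one (by norm_num) (by norm_num) hk.le).trans
        (half_pow_le_dshift (Ne.symm hne))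
    rw [one_div_pow, div_le_iff₀ (by positivity)] at hd
    calc |g ω| ≤ M := hM ω
      _ ≤ M * (2 ^ r * dshift ω ω') ^ α :=
        le_mul_of_one_le_right hM0 (Real.one_le_rpow (by linarith) hα)
      _ = M * (2 ^ r) ^ α * dshift ω ω' ^ α := by
        rw [Real.mul_rpow (by positivity) (dshift_nonneg ω ω'), mul_assoc]
  refine ⟨C + M * (2 ^ r) ^ α, by positivity, fun ω ω' => ?_⟩
  have hd : 0 ≤ dshift ω ω' ^ α := Real.rpow_nonneg (dshift_nonneg ω ω') α
  have hK : 0 ≤ M * (2 ^ r : ℝ) ^ α := by positivity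
  by_cases hω : ω ∈ S <;> by_cases hω' : ω' ∈ S
  · rw [Set.indicator_of_mem hω, Set.indicator_of_mem hω']
    nlinarith [hC ω ω']
  · rw [Set.indicator_of_mem hω, Set.indicator_of_notMem hω', sub_zero]
    nlinarith [hbdry ω ω' hω hω']
  · rw [Set.indicator_of_notMem hω, Set.indicator_of_mem hω', zero_sub, abs_neg, dshift_comm]
    nlinarith [hbdry ω' ω hω' hω, Real.rpow_nonneg (dshift_nonneg ω' ω) α]
  · rw [Set.indicator_of_notMem hω, Set.indicator_of_notMem hω', sub_self, abs_zero]
    positivity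

lemma continuous (hα : 0 < α) (hg : HolderOfOrder α g) : Continuous g := by
  obtain ⟨C, hC0, hC⟩ := hg
  have hgeom : Tendsto (fun m : ℕ => 2 * (N : ℝ) * (1 / 2 : ℝ) ^ m) atTop (𝓝 0) := by
    simpa using (tendsto_pow_atTop_nhds_zero_of_lt_one (by norm_num)
      (by norm_num : (1 / 2 : ℝ) < 1)).const_mul (2 * (N : ℝ))
  have hlim : Tendsto (fun m : ℕ => C * (2 * N * (1 / 2 : ℝ) ^ m) ^ α) atTop (𝓝 0) := by
    simpa [Real.zero_rpow hα.ne'] using (hgeom.rpow_const (Or.inr hα.le)).const_mul C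
  refine continuous_iff_continuousAt.2 fun ω => Metric.tendsto_nhds.2 fun ε hε => ?_
  obtain ⟨m, hm⟩ := (hlim.eventually (gt_mem_nhds hε)).exists
  filter_upwards [(isOpen_cyl ω m).mem_nhds (mem_cyl_self ω m)] with ω' hω'
  rw [Real.dist_eq]
  calc |g ω' - g ω| ≤ C * dshift ω' ω ^ α := hC ω' ω
    _ ≤ C * (2 * N * (1 / 2 : ℝ) ^ m) ^ α := by
      rw [dshift_comm]
      gcongr
      exacts [dshift_nonneg ω ω', dshift_le_of_mem_cyl hω']
    _ < ε := hm

end HolderOfOrder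

lemma HolderOfOrder.birkhoff {α : ℝ} (hα : 0 ≤ α) {f : Shift N A → ℝ} (hf : HolderOfOrder α f)
    (n : ℕ) : HolderOfOrder α (birkhoff f n) :=
  HolderOfOrder.sum (fun k => hf.comp_iterate hα k) (Finset.range n)

lemma holderCont_indicator_exp_neg_birkhoff {f : Shift N A → ℝ} (hf : HolderCont f) {r : ℕ}
    {S : Set (Shift N A)} (hS : DependsOnFirst r S) (n : ℕ) :
    HolderCont (S.indicator fun ω => Real.exp (-birkhoff f n ω)) := by
  obtain ⟨α, hα, hfα⟩ := holderCont_iff.1 hf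
  exact holderCont_iff.2 ⟨α, hα, ((hfα.birkhoff hα.le n).neg.exp hα.le).indicator hα.le hS⟩

lemma continuous_exp_neg_birkhoff {f : Shift N A → ℝ} (hf : HolderCont f) (n : ℕ) :
    Continuous fun ω => Real.exp (-birkhoff f n ω) := by
  obtain ⟨α, hα, hfα⟩ := holderCont_iff.1 hf
  exact ((hfα.birkhoff hα.le n).neg.exp hα.le).continuous hα

end Holder

section Eigenmeasure

lemma transferOp_indicator_of_injOn (f g : Shift N A → ℝ) {S : Set (Shift N A)}
    (hS : Set.InjOn shiftMap S) :
    transferOp f (S.indicator fun ω => Real.exp (-f ω) * g (shiftMap ω)) =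
      (shiftMap '' S).indicator g := by
  funext ω
  by_cases hω : ω ∈ shiftMap '' S
  · obtain ⟨ω', hω'S, rfl⟩ := hω
    rw [Set.indicator_of_mem (Set.mem_image_of_mem _ hω'S), transferOp,
      tsum_eq_single ⟨ω', rfl⟩, Set.indicator_of_mem hω'S, ← mul_assoc, ← Real.exp_add,
      add_neg_cancel, Real.exp_zero, one_mul]
    rintro ⟨ω'', hω''⟩ hne
    rw [Set.indicator_of_notMem fun h => hne (Subtype.ext (hS h hω'S hω'')), mul_zero]
  · rw [Set.indicator_of_notMem hω, transferOp]
    refine (tsum_congr fun ω' => ?_).trans tsum_zero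
    rw [Set.indicator_of_notMem fun h => hω ⟨ω'.1, h, ω'.2⟩, mul_zero]

def IsDualEigenmeasure (f : Shift N A → ℝ) (lam : ℝ) (ν : Measure (Shift N A)) : Prop :=
  ∀ φ : Shift N A → ℝ, HolderCont φ → ∫ ω, transferOp f φ ω ∂ν = lam * ∫ ω, φ ω ∂ν

variable {f : Shift N A → ℝ} {lam : ℝ} {ν : Measure (Shift N A)}

lemma lam_pow_mul_integral_indicator_eq (hf : HolderCont f)
    (heig : IsDualEigenmeasure f lam ν) (n : ℕ) {r : ℕ} {S : Set (Shift N A)}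
    (hS : DependsOnFirst r S) (hinj : Set.InjOn shiftMap^[n] S) :
    lam ^ n * ∫ ω, S.indicator (fun ω => Real.exp (-birkhoff f n ω)) ω ∂ν =
      ν.real (shiftMap^[n] '' S) := by
  induction n generalizing r S with
  | zero =>
    simp only [pow_zero, one_mul, birkhoff_eq_birkhoffSum, birkhoffSum_zero, neg_zero,
      Real.exp_zero, Function.iterate_zero, Set.image_id]
    exact integral_indicator_one hS.measurableSet
  | succ n ih =>
    rw [Function.iterate_succ] at hinj ⊢
    have hsplit : S.indicator (fun ω => Real.exp (-birkhoff f (n + 1) ω)) =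
        S.indicator fun ω => Real.exp (-f ω) * Real.exp (-birkhoff f n (shiftMap ω)) := by
      simp only [birkhoff_eq_birkhoffSum, birkhoffSum_succ', neg_add, Real.exp_add]
    rw [pow_succ, mul_assoc, ← heig _ (holderCont_indicator_exp_neg_birkhoff hf hS (n + 1)),
      hsplit, transferOp_indicator_of_injOn f (fun ω => Real.exp (-birkhoff f n ω)) hinj.of_comp,
      ih ((hS.mono r.le_succ).image_shiftMap) hinj.image_of_comp, Set.image_comp]

lemma integrable_const_mul_exp_neg_birkhoff [IsFiniteMeasure ν] (hf : HolderCont f) (c : ℝ)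
    (n : ℕ) : Integrable (fun ω => c * Real.exp (-birkhoff f n ω)) ν :=
  (continuous_const.mul (continuous_exp_neg_birkhoff hf n)).integrable_of_hasCompactSupport
    (.of_compactSpace _)

lemma measureReal_image_iterate_eq_setIntegral [IsFiniteMeasure ν] (hf : HolderCont f)
    (hlam : 0 ≤ lam) (heig : IsDualEigenmeasure f lam ν) {n : ℕ} (w : Fin n → Fin N)
    {E : Set (Shift N A)} (hEw : E ⊆ cylW w) :
    ν.real (shiftMap^[n] '' E) = ∫ ω in E, lam ^ n * Real.exp (-birkhoff f n ω) ∂ν := by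
  set ρ := fun ω => lam ^ n * Real.exp (-birkhoff f n ω)
  have hρ_nonneg : ∀ ω, 0 ≤ ρ ω := fun ω => by positivity
  have hρ_int : Integrable ρ ν := integrable_const_mul_exp_neg_birkhoff hf _ n
  have : IsFiniteMeasure (ν.withDensity fun ω => ENNReal.ofReal (ρ ω)) :=
    isFiniteMeasure_withDensity_ofReal hρ_int.2
  have hdensity : ∀ s,
      ν.withDensity (fun ω => ENNReal.ofReal (ρ ω)) s = ENNReal.ofReal (∫ ω in s, ρ ω ∂ν) :=
    fun s => by
      rw [withDensity_apply' _ s, ofReal_integral_eq_lintegral_ofReal hρ_int.integrableOn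
        (ae_of_all _ hρ_nonneg)]
  have hcyl : ∀ s ∈ {S | ∃ r, DependsOnFirst r S},
      ν (shiftMap^[n] '' (s ∩ cylW w)) =
        ν.withDensity (fun ω => ENNReal.ofReal (ρ ω)) (s ∩ cylW w) := by
    rintro s ⟨r, hs⟩
    have hsw := hs.inter (dependsOnFirst_cylW w)
    rw [hdensity, ← ofReal_measureReal, ← lam_pow_mul_integral_indicator_eq hf
      heig n hsw ((injOn_iterate_cylW w).mono Set.inter_subset_right),
      integral_indicator hsw.measurableSet, ← integral_const_mul]
  rw [measureReal_def, measure_image_eq_of_isPiSystem (dependsOnFirst_cylW w).isClosed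
    (continuous_shiftMap.iterate n).continuousOn (injOn_iterate_cylW w) ν _
    measurableSpace_eq_generateFrom_dependsOnFirst isPiSystem_dependsOnFirst
    ⟨0, dependsOnFirst_univ⟩ hcyl hEw, hdensity E,
    ENNReal.toReal_ofReal (integral_nonneg hρ_nonneg)]

lemma measure_eq_zero_of_measure_image_iterate_eq_zero [IsFiniteMeasure ν] (hf : HolderCont f)
    (hlam : 0 < lam) (heig : IsDualEigenmeasure f lam ν) {n : ℕ} (w : Fin n → Fin N)
    {E : Set (Shift N A)} (hEw : E ⊆ cylW w) (h0 : ν (shiftMap^[n] '' E) = 0) : ν E = 0 := by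
  have hρ_pos : ∀ ω, 0 < lam ^ n * Real.exp (-birkhoff f n ω) :=
    fun ω => mul_pos (pow_pos hlam n) (Real.exp_pos _)
  by_contra hne
  have hpos : 0 < ∫ ω in E, lam ^ n * Real.exp (-birkhoff f n ω) ∂ν := by
    refine (setIntegral_pos_iff_support_of_nonneg_ae (ae_of_all _ fun ω => (hρ_pos ω).le)
      (integrable_const_mul_exp_neg_birkhoff hf _ n).integrableOn).2 ?_
    rw [Function.support_eq_univ fun ω => (hρ_pos ω).ne', Set.univ_inter]
    exact pos_iff_ne_zero.2 hne
  rw [← measureReal_image_iterate_eq_setIntegral hf hlam.le heig w hEw, measureReal_def, h0,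
    ENNReal.toReal_zero] at hpos
  exact hpos.false

lemma measure_preimage_shiftMap_eq_zero [IsFiniteMeasure ν] (hf : HolderCont f) (hlam : 0 < lam)
    (heig : IsDualEigenmeasure f lam ν) {B : Set (Shift N A)} (hB0 : ν B = 0) :
    ν (shiftMap ⁻¹' B) = 0 := by
  have hcover : shiftMap ⁻¹' B = ⋃ a : Fin N, shiftMap ⁻¹' B ∩ cylW (fun _ : Fin 1 => a) := by
    ext ω
    simp only [Set.mem_iUnion, Set.mem_inter_iff, cylW]
    exact ⟨fun h => ⟨ω.1 0, h, fun k => by rw [Subsingleton.elim k 0]; rfl⟩, fun ⟨_, h, _⟩ => h⟩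
  rw [hcover]
  refine measure_iUnion_null fun a => measure_eq_zero_of_measure_image_iterate_eq_zero hf hlam
    heig _ Set.inter_subset_right (measure_mono_null ?_ hB0)
  rintro _ ⟨ω, hω, rfl⟩
  exact hω.1

end Eigenmeasure

end

theorem eigenmeasure_nonsingular_jacobian_general
    (N : ℕ) (A : Matrix (Fin N) (Fin N) ℝ)
    (f : Shift N A → ℝ) (hf : HolderCont f)
    (lam : ℝ) (hlam : lam = Real.exp (pressure f))
    (ν : Measure (Shift N A)) (hprob : IsProbabilityMeasure ν)
    (heig : ∀ φ : Shift N A → ℝ, HolderCont φ →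
      ∫ ω, transferOp f φ ω ∂ν = lam * ∫ ω, φ ω ∂ν) :
    (∀ B : Set (Shift N A), MeasurableSet B → ν B = 0 → ν (shiftMap ⁻¹' B) = 0) ∧
    (∀ (n : ℕ) (w : Fin n → Fin N) (E : Set (Shift N A)), MeasurableSet E →
      E ⊆ cylW w →
      (ν (shiftMap^[n] '' E)).toReal = ∫ ω in E, lam ^ n * Real.exp (-(birkhoff f n ω)) ∂ν) := by
  have hlam_pos : 0 < lam := hlam ▸ Real.exp_pos _
  exact ⟨fun _ _ hB0 => measure_preimage_shiftMap_eq_zero hf hlam_pos heig hB0,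
    fun _ w _ _ hEw => measureReal_image_iterate_eq_setIntegral hf hlam_pos.le heig w hEw⟩

/-- Let `f` be Hölder continuous and `ν` the eigenmeasure of the dual transfer operator:
`∫ L_f φ dν = λ_f ∫ φ dν` for all Hölder `φ`, where `λ_f = e^{P(σ,f)}`.  Then `ν` is
non-singular, and the `n`-th Jacobian of `ν` is `λ_f^{-n} e^{S_n f}`; equivalently, for every
word `w` of length `n` and every Borel set `E ⊆ [w]`,
`ν (σⁿ E) = ∫_E λ_f^n e^{−S_n f} dν`. -/
theorem eigenmeasure_nonsingular_jacobian
    (N : ℕ) (hN : 2 ≤ N) (A : Matrix (Fin N) (Fin N) ℝ)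
    (h01 : ZeroOne A) (hap : Aperiodic A)
    (f : Shift N A → ℝ) (hf : HolderCont f)
    (lam : ℝ) (hlam : lam = Real.exp (pressure f))
    (ν : Measure (Shift N A)) (hprob : IsProbabilityMeasure ν)
    (heig : ∀ φ : Shift N A → ℝ, HolderCont φ →
      ∫ ω, transferOp f φ ω ∂ν = lam * ∫ ω, φ ω ∂ν) :
    (∀ B : Set (Shift N A), MeasurableSet B → ν B = 0 → ν (shiftMap ⁻¹' B) = 0) ∧
    (∀ (n : ℕ) (w : Fin n → Fin N) (E : Set (Shift N A)), MeasurableSet E →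
      E ⊆ cylW w →
      (ν (shiftMap^[n] '' E)).toReal = ∫ ω in E, lam ^ n * Real.exp (-(birkhoff f n ω)) ∂ν) :=
  eigenmeasure_nonsingular_jacobian_general N A f hf lam hlam ν hprob heig
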